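/- arXiv:2402.10103 — 2 statements merged into one kernel-verified Lean document; each statement's English description precedes it below -/
import Mathlib

section
/- In a strong distributive lattice S of group semirings G_α (α ∈ D), for all α, β ∈ D with β ≤ α, the connecting homomorphism φ_{α,β} : G_α → G_β is a group isomorphism and ψ_{β,α} = (φ_{α,β})^{-1}; that is, ψ_{β,α}(φ_{α,β}(x)) = x for all x ∈ G_α and φ_{α,β}(ψ_{β,α}(y)) = y for all y ∈ G_β. -/
/-!
For `β ≤ α`, right distributivity applied to `((β, 1) + (α, x)) · (α, x)` gives
`(α, x) = (β, φ_{α,β} x) + (α, x²) = (α, ψ_{β,α} φ_{α,β} x)`, so `ψ_{β,α} ∘ φ_{α,β} = id`.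
The compatibility condition with `α = β` and `δ = α` reads
`ψ_{β,β} φ_{β,β} = φ_{α,β} ψ_{β,α}`, so `φ_{α,β} ∘ ψ_{β,α} = id`.

The indices `β ⊓ β`, `(β ⊔ α) ⊓ α`, … are only propositionally equal to `β` and `α`,
so the computations are carried out in the sigma type.
-/

variable {D : Type*} [DistribLattice D] {G : D → Type*} [∀ α : D, Group (G α)]

/-- Multiplication on the disjoint union `S = Σ α, G α`:
`(α, x) · (β, y) = (αβ, φ_{α,αβ}(x) · φ_{β,αβ}(y))`. -/
def sdlMul (φ : ∀ α β : D, β ≤ α → (G α →* G β)) (s t : Σ α : D, G α) :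
    Σ α : D, G α :=
  ⟨s.1 ⊓ t.1,
    φ s.1 (s.1 ⊓ t.1) inf_le_left s.2 * φ t.1 (s.1 ⊓ t.1) inf_le_right t.2⟩

/-- Addition on the disjoint union `S = Σ α, G α`:
`(α, x) + (β, y) = (α + β, ψ_{α,α+β}(x))` (each `G α` carries the left-zero
addition, so `ψ_{α,α+β}(x) + ψ_{β,α+β}(y) = ψ_{α,α+β}(x)`). -/
def sdlAdd (ψ : ∀ β α : D, β ≤ α → (G β →* G α)) (s t : Σ α : D, G α) :
    Σ α : D, G α :=
  ⟨s.1 ⊔ t.1, ψ s.1 (s.1 ⊔ t.1) le_sup_left s.2⟩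

section Transport

variable {L : Type*} [Preorder L] {H : L → Type*} [∀ a : L, MulOneClass (H a)]

theorem sigma_mk_phi_of_eq (φ : ∀ a b : L, b ≤ a → (H a →* H b))
    (hφ_id : ∀ (a : L) (x : H a), φ a a le_rfl x = x)
    {a b : L} (e : b = a) (p : b ≤ a) (x : H a) :
    (⟨b, φ a b p x⟩ : Σ c, H c) = ⟨a, x⟩ := by
  subst e
  rw [hφ_id]

theorem sigma_mk_psi_phi_congr (φ : ∀ a b : L, b ≤ a → (H a →* H b))
    (ψ : ∀ b a : L, b ≤ a → (H b →* H a)) {a b b' c : L} (hb : b' = b) (hc : c = a)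
    (p : b' ≤ c) (q : b' ≤ a) (h : b ≤ a) (x : H a) :
    (⟨c, ψ b' c p (φ a b' q x)⟩ : Σ d, H d) = ⟨a, ψ b a h (φ a b h x)⟩ := by
  subst hb hc
  rfl

end Transport

theorem phi_psi_eq_self_of_compat {L : Type*} [Lattice L] {H : L → Type*}
    [∀ a : L, MulOneClass (H a)]
    (φ : ∀ a b : L, b ≤ a → (H a →* H b)) (ψ : ∀ b a : L, b ≤ a → (H b →* H a))
    (hφ_id : ∀ (a : L) (x : H a), φ a a le_rfl x = x)
    (hψ_id : ∀ (a : L) (x : H a), ψ a a le_rfl x = x)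
    (hcompat : ∀ {a b d : L} (h : a ⊔ b ≤ d) (x : H a),
      ψ (a ⊓ b) b inf_le_right (φ a (a ⊓ b) inf_le_left x)
        = φ d b (le_sup_right.trans h) (ψ a d (le_sup_left.trans h) x))
    {α β : L} (h : β ≤ α) (y : H β) :
    φ α β h (ψ β α h y) = y := by
  have hidem : ψ (β ⊓ β) β inf_le_right (φ β (β ⊓ β) inf_le_left y) = y := by
    apply sigma_mk_injective
    rw [sigma_mk_psi_phi_congr φ ψ (inf_idem β) rfl _ _ le_rfl, hφ_id, hψ_id]
  rw [← hcompat (sup_le h h), hidem]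

theorem psi_phi_eq_self_of_rdistrib
    (φ : ∀ α β : D, β ≤ α → (G α →* G β)) (ψ : ∀ β α : D, β ≤ α → (G β →* G α))
    (hφ_id : ∀ (α : D) (x : G α), φ α α le_rfl x = x)
    (hrdistrib : ∀ s t u : Σ α : D, G α,
      sdlMul φ (sdlAdd ψ s t) u = sdlAdd ψ (sdlMul φ s u) (sdlMul φ t u))
    {α β : D} (h : β ≤ α) (x : G α) :
    ψ β α h (φ α β h x) = x := by
  have hsup : β ⊔ α = α := sup_eq_right.mpr h
  have hinf : β ⊓ α = β := inf_eq_left.mpr h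
  have hdist := hrdistrib ⟨β, 1⟩ ⟨α, x⟩ ⟨α, x⟩
  dsimp only [sdlMul, sdlAdd] at hdist
  simp only [map_one, one_mul] at hdist
  rw [sigma_mk_phi_of_eq φ hφ_id (by rw [hsup, inf_idem]),
    sigma_mk_psi_phi_congr φ ψ hinf (by rw [hinf, inf_idem, hsup]) _ _ h] at hdist
  exact (sigma_mk_injective hdist).symm

theorem sdl_phi_isomorphism_general
    (φ : ∀ α β : D, β ≤ α → (G α →* G β))
    (ψ : ∀ β α : D, β ≤ α → (G β →* G α))
    (hφ_id : ∀ (α : D) (x : G α), φ α α le_rfl x = x)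
    (hψ_id : ∀ (α : D) (x : G α), ψ α α le_rfl x = x)
    (hcompat : ∀ {α β δ : D} (h : α ⊔ β ≤ δ) (x : G α),
      ψ (α ⊓ β) β inf_le_right (φ α (α ⊓ β) inf_le_left x)
        = φ δ β (le_sup_right.trans h) (ψ α δ (le_sup_left.trans h) x))
    (hrdistrib : ∀ s t u : Σ α : D, G α,
      sdlMul φ (sdlAdd ψ s t) u = sdlAdd ψ (sdlMul φ s u) (sdlMul φ t u))
    {α β : D} (h : β ≤ α) :
    Function.Bijective (φ α β h) ∧
    (∀ x : G α, ψ β α h (φ α β h x) = x) ∧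
    (∀ y : G β, φ α β h (ψ β α h y) = y) := by
  have hleft := psi_phi_eq_self_of_rdistrib φ ψ hφ_id hrdistrib h
  have hright := phi_psi_eq_self_of_compat φ ψ hφ_id hψ_id hcompat h
  exact ⟨Function.bijective_iff_has_inverse.mpr ⟨ψ β α h, hleft, hright⟩, hleft, hright⟩

/-- In a strong distributive lattice `S` of group semirings
`G α` (`α ∈ D`), for `β ≤ α` the connecting homomorphism
`φ_{α,β} : G α → G β` is a group isomorphism and `ψ_{β,α} = (φ_{α,β})⁻¹`:
`ψ_{β,α}(φ_{α,β}(x)) = x` for all `x ∈ G α` and `φ_{α,β}(ψ_{β,α}(y)) = y`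
for all `y ∈ G β`. -/
theorem sdl_phi_isomorphism
    (φ : ∀ α β : D, β ≤ α → (G α →* G β))
    (ψ : ∀ β α : D, β ≤ α → (G β →* G α))
    (hφ_id : ∀ (α : D) (x : G α), φ α α le_rfl x = x)
    (hψ_id : ∀ (α : D) (x : G α), ψ α α le_rfl x = x)
    (hφ_trans : ∀ {α β γ : D} (h1 : γ ≤ β) (h2 : β ≤ α) (x : G α),
      φ β γ h1 (φ α β h2 x) = φ α γ (h1.trans h2) x)
    (hψ_trans : ∀ {α β γ : D} (h1 : γ ≤ β) (h2 : β ≤ α) (x : G γ),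
      ψ β α h2 (ψ γ β h1 x) = ψ γ α (h1.trans h2) x)
    (hcompat : ∀ {α β δ : D} (h : α ⊔ β ≤ δ) (x : G α),
      ψ (α ⊓ β) β inf_le_right (φ α (α ⊓ β) inf_le_left x)
        = φ δ β (le_sup_right.trans h) (ψ α δ (le_sup_left.trans h) x))
    (hldistrib : ∀ s t u : Σ α : D, G α,
      sdlMul φ s (sdlAdd ψ t u) = sdlAdd ψ (sdlMul φ s t) (sdlMul φ s u))
    (hrdistrib : ∀ s t u : Σ α : D, G α,
      sdlMul φ (sdlAdd ψ s t) u = sdlAdd ψ (sdlMul φ s u) (sdlMul φ t u))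
    {α β : D} (h : β ≤ α) :
    Function.Bijective (φ α β h) ∧
    (∀ x : G α, ψ β α h (φ α β h x) = x) ∧
    (∀ y : G β, φ α β h (ψ β α h y) = y) :=
  sdl_phi_isomorphism_general φ ψ hφ_id hψ_id hcompat hrdistrib h
end

section
/- In a strong distributive lattice S of group semirings G_α (α ∈ D), all the component groups are mutually isomorphic: for every α, β ∈ D there exists a group isomorphism G_α ≅ G_β. -/
/-!
Every `φ_{δ,γ}` is a group isomorphism with inverse `ψ_{γ,δ}`. The compatibility condition
for `α = β = γ` reads `ψ_{γγ,γ} ∘ φ_{γ,γγ} = φ_{δ,γ} ∘ ψ_{γ,δ}`, and its left side is the identity,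
so `φ_{δ,γ} ∘ ψ_{γ,δ} = id`. Left distributivity applied to `(δ, x) · ((γ, 1) + (δ, 1))`
compares `(δ, x)` with `(δγ + δ, ψ_{δγ,δγ+δ}(φ_{δ,δγ}(x)))`, so `ψ_{δγ,δ} ∘ φ_{δ,δγ} = id`.
Hence `G α ≅ G (αβ) ≅ G β`.
-/

variable {D : Type*} [DistribLattice D] {G : D → Type*} [∀ α : D, Group (G α)]

@[simp]
theorem sdlMul_mk (φ : ∀ α β : D, β ≤ α → (G α →* G β)) {α β : D} (x : G α) (y : G β) :
    sdlMul φ ⟨α, x⟩ ⟨β, y⟩ = ⟨α ⊓ β, φ α (α ⊓ β) inf_le_left x * φ β (α ⊓ β) inf_le_right y⟩ :=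
  rfl

@[simp]
theorem sdlAdd_mk (ψ : ∀ β α : D, β ≤ α → (G β →* G α)) {α β : D} (x : G α) (y : G β) :
    sdlAdd ψ ⟨α, x⟩ ⟨β, y⟩ = ⟨α ⊔ β, ψ α (α ⊔ β) le_sup_left x⟩ :=
  rfl

section StructureMaps

variable {φ : ∀ α β : D, β ≤ α → (G α →* G β)} {ψ : ∀ β α : D, β ≤ α → (G β →* G α)}

theorem heq_phi_of_eq (hφ_id : ∀ (α : D) (x : G α), φ α α le_rfl x = x)
    {α β : D} (e : β = α) (h : β ≤ α) (x : G α) : φ α β h x ≍ x := by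
  subst e
  exact heq_of_eq (hφ_id β x)

theorem heq_psi_of_eq (hψ_id : ∀ (α : D) (x : G α), ψ α α le_rfl x = x)
    {α β : D} (e : β = α) (h : β ≤ α) (x : G β) : ψ β α h x ≍ x := by
  subst e
  exact heq_of_eq (hψ_id β x)

theorem phi_psi_apply_of_le (hφ_id : ∀ (α : D) (x : G α), φ α α le_rfl x = x)
    (hψ_id : ∀ (α : D) (x : G α), ψ α α le_rfl x = x)
    (hcompat : ∀ {α β δ : D} (h : α ⊔ β ≤ δ) (x : G α),
      ψ (α ⊓ β) β inf_le_right (φ α (α ⊓ β) inf_le_left x)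
        = φ δ β (le_sup_right.trans h) (ψ α δ (le_sup_left.trans h) x))
    {γ δ : D} (h : γ ≤ δ) (x : G γ) : φ δ γ h (ψ γ δ h x) = x := by
  rw [← hcompat (sup_le h h)]
  exact eq_of_heq ((heq_psi_of_eq hψ_id (inf_idem γ) _ _).trans
    (heq_phi_of_eq hφ_id (inf_idem γ) _ _))

theorem psi_phi_inf_apply (hφ_id : ∀ (α : D) (x : G α), φ α α le_rfl x = x)
    (hldistrib : ∀ s t u : Σ α : D, G α,
      sdlMul φ s (sdlAdd ψ t u) = sdlAdd ψ (sdlMul φ s t) (sdlMul φ s u))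
    (γ δ : D) (x : G δ) : ψ (δ ⊓ γ) δ inf_le_left (φ δ (δ ⊓ γ) inf_le_left x) = x := by
  have H := hldistrib ⟨δ, x⟩ ⟨γ, 1⟩ ⟨δ, 1⟩
  simp only [sdlMul_mk, sdlAdd_mk, map_one, mul_one, Sigma.mk.injEq] at H
  have retarget : ∀ {ε : D} (e : ε = δ) (hε : δ ⊓ γ ≤ ε),
      ψ (δ ⊓ γ) ε hε (φ δ (δ ⊓ γ) inf_le_left x) ≍
        ψ (δ ⊓ γ) δ inf_le_left (φ δ (δ ⊓ γ) inf_le_left x) := by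
    rintro ε rfl _
    rfl
  exact eq_of_heq ((retarget (by simp) _).symm.trans
    (H.2.symm.trans (heq_phi_of_eq hφ_id (by simp) _ x)))

theorem psi_phi_apply_of_le (hφ_id : ∀ (α : D) (x : G α), φ α α le_rfl x = x)
    (hldistrib : ∀ s t u : Σ α : D, G α,
      sdlMul φ s (sdlAdd ψ t u) = sdlAdd ψ (sdlMul φ s t) (sdlMul φ s u))
    {γ δ : D} (h : γ ≤ δ) (x : G δ) : ψ γ δ h (φ δ γ h x) = x := by
  have key : ∀ hδγ : δ ⊓ γ ≤ δ, ψ (δ ⊓ γ) δ hδγ (φ δ (δ ⊓ γ) hδγ x) = x :=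
    fun _ => psi_phi_inf_apply hφ_id hldistrib γ δ x
  rw [inf_eq_right.mpr h] at key
  exact key h

end StructureMaps

theorem sdl_components_isomorphic_general
    (φ : ∀ α β : D, β ≤ α → (G α →* G β))
    (ψ : ∀ β α : D, β ≤ α → (G β →* G α))
    (hφ_id : ∀ (α : D) (x : G α), φ α α le_rfl x = x)
    (hψ_id : ∀ (α : D) (x : G α), ψ α α le_rfl x = x)
    (hcompat : ∀ {α β δ : D} (h : α ⊔ β ≤ δ) (x : G α),
      ψ (α ⊓ β) β inf_le_right (φ α (α ⊓ β) inf_le_left x)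
        = φ δ β (le_sup_right.trans h) (ψ α δ (le_sup_left.trans h) x))
    (hldistrib : ∀ s t u : Σ α : D, G α,
      sdlMul φ s (sdlAdd ψ t u) = sdlAdd ψ (sdlMul φ s t) (sdlMul φ s u))
    (α β : D) :
    Nonempty (G α ≃* G β) := by
  have iso : ∀ {γ δ : D}, γ ≤ δ → (G δ ≃* G γ) := fun h =>
    (φ _ _ h).toMulEquiv (ψ _ _ h)
      (MonoidHom.ext (psi_phi_apply_of_le hφ_id hldistrib h))
      (MonoidHom.ext (phi_psi_apply_of_le hφ_id hψ_id hcompat h))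
  exact ⟨(iso inf_le_left).trans (iso inf_le_right).symm⟩

/-- In a strong distributive lattice `S` of group semirings
`G α` (`α ∈ D`), all the component groups are mutually isomorphic: for every
`α, β ∈ D` there is a group isomorphism `G α ≃* G β`. -/
theorem sdl_components_isomorphic
    (φ : ∀ α β : D, β ≤ α → (G α →* G β))
    (ψ : ∀ β α : D, β ≤ α → (G β →* G α))
    (hφ_id : ∀ (α : D) (x : G α), φ α α le_rfl x = x)
    (hψ_id : ∀ (α : D) (x : G α), ψ α α le_rfl x = x)
    (hφ_trans : ∀ {α β γ : D} (h1 : γ ≤ β) (h2 : β ≤ α) (x : G α),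
      φ β γ h1 (φ α β h2 x) = φ α γ (h1.trans h2) x)
    (hψ_trans : ∀ {α β γ : D} (h1 : γ ≤ β) (h2 : β ≤ α) (x : G γ),
      ψ β α h2 (ψ γ β h1 x) = ψ γ α (h1.trans h2) x)
    (hcompat : ∀ {α β δ : D} (h : α ⊔ β ≤ δ) (x : G α),
      ψ (α ⊓ β) β inf_le_right (φ α (α ⊓ β) inf_le_left x)
        = φ δ β (le_sup_right.trans h) (ψ α δ (le_sup_left.trans h) x))
    (hldistrib : ∀ s t u : Σ α : D, G α,
      sdlMul φ s (sdlAdd ψ t u) = sdlAdd ψ (sdlMul φ s t) (sdlMul φ s u))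
    (hrdistrib : ∀ s t u : Σ α : D, G α,
      sdlMul φ (sdlAdd ψ s t) u = sdlAdd ψ (sdlMul φ s u) (sdlMul φ t u))
    (α β : D) :
    Nonempty (G α ≃* G β) :=
  sdl_components_isomorphic_general φ ψ hφ_id hψ_id hcompat hldistrib α β
end
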